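/- arXiv:math/0308073 — 6 statements merged into one kernel-verified Lean document; each statement's English description precedes it below -/
import Mathlib

section
/- For a negative definite integer symmetric b×b matrix Q with basis vectors x₁,…,x_b, every characteristic covector c has a representative c' ≡ c (mod 2·Qℤ^b) satisfying (Qx_i)·x_i ≤ c'(x_i) < |(Qx_i)·x_i| for all i, and c' has square (w.r.t. Q⁻¹) at least that of c. -/
open Matrix

/-- The square of a covector `c` with respect to `Q⁻¹` (over `ℚ`). -/
noncomputable def covSq {b : ℕ} (Q : Matrix (Fin b) (Fin b) ℤ) (c : Fin b → ℤ) : ℚ :=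
  (fun i => (c i : ℚ)) ⬝ᵥ ((Q.map (Int.cast : ℤ → ℚ))⁻¹).mulVec (fun i => (c i : ℚ))

/-!
Write `c' = c + 2Qy`. Then `c'ᵀQ⁻¹c' = cᵀQ⁻¹c + 4 (c·y + yᵀQy)`, and by negative definiteness
the gain `c·y + yᵀQy` is bounded above on `ℤ^b`, so it attains its maximum. At a maximizer the
moves `y ↦ y ± eᵢ` do not increase the gain, which puts `c'ᵢ` in `[Qᵢᵢ, -Qᵢᵢ]`; in particular
the maximizers form a finite set, since `y ↦ c'` is injective. A maximizer with the largest
coordinate sum avoids the face `c'ᵢ = -Qᵢᵢ`, because there `y + eᵢ` would be a maximizer with a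
larger sum. Finally the gain at a maximizer is at least the gain `0` at `y = 0`.
-/

namespace Matrix

variable {n R : Type*} [Fintype n]

theorem add_dotProduct_mulVec_add [CommRing R] {A : Matrix n n R} (hA : A.IsSymm)
    (p w : n → R) :
    (p + w) ⬝ᵥ A *ᵥ (p + w) = p ⬝ᵥ A *ᵥ p + 2 * (A *ᵥ p ⬝ᵥ w) + w ⬝ᵥ A *ᵥ w := by
  have hpw : p ⬝ᵥ A *ᵥ w = A *ᵥ p ⬝ᵥ w := by
    rw [dotProduct_mulVec, ← mulVec_transpose, hA.eq]
  have hwp : w ⬝ᵥ A *ᵥ p = A *ᵥ p ⬝ᵥ w := dotProduct_comm _ _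
  simp only [mulVec_add, dotProduct_add, add_dotProduct, hpw, hwp]
  ring

theorem add_mulVec_dotProduct_inv_mulVec_add [DecidableEq n] [CommRing R] {A : Matrix n n R}
    (hA : A.IsSymm) (hdet : IsUnit A.det) (u w : n → R) :
    (u + A *ᵥ w) ⬝ᵥ A⁻¹ *ᵥ (u + A *ᵥ w)
      = u ⬝ᵥ A⁻¹ *ᵥ u + 2 * (u ⬝ᵥ w) + w ⬝ᵥ A *ᵥ w := by
  set p := A⁻¹ *ᵥ u
  have hu : u = A *ᵥ p := by rw [mulVec_mulVec, mul_nonsing_inv A hdet, one_mulVec]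
  have hinv : ∀ v, A⁻¹ *ᵥ (A *ᵥ v) = v := fun v => by
    rw [mulVec_mulVec, nonsing_inv_mul A hdet, one_mulVec]
  rw [hu, ← mulVec_add, hinv, dotProduct_comm, add_dotProduct_mulVec_add hA,
    dotProduct_comm p]

end Matrix

section IntegralForm

variable {n : Type*} [Fintype n] {Q : Matrix n n ℤ}

def gain (Q : Matrix n n ℤ) (c y : n → ℤ) : ℤ := c ⬝ᵥ y + y ⬝ᵥ Q *ᵥ y

theorem mulVec_injective_of_negDef (hneg : ∀ x : n → ℤ, x ≠ 0 → x ⬝ᵥ Q *ᵥ x < 0) :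
    Function.Injective Q.mulVec := by
  intro x y hxy
  by_contra hne
  have := hneg (x - y) (sub_ne_zero.mpr hne)
  rw [mulVec_sub, hxy, sub_self, dotProduct_zero] at this
  exact this.false

theorem dotProduct_mulVec_nonpos_of_negDef (hneg : ∀ x : n → ℤ, x ≠ 0 → x ⬝ᵥ Q *ᵥ x < 0)
    (x : n → ℤ) : x ⬝ᵥ Q *ᵥ x ≤ 0 := by
  by_cases hx : x = 0
  · simp [hx]
  · exact (hneg x hx).le

variable [DecidableEq n]

theorem det_ne_zero_of_negDef (hneg : ∀ x : n → ℤ, x ≠ 0 → x ⬝ᵥ Q *ᵥ x < 0) : Q.det ≠ 0 := by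
  intro hdet
  obtain ⟨v, hv, hQv⟩ := exists_mulVec_eq_zero_iff.mpr hdet
  exact hv (mulVec_injective_of_negDef hneg (hQv.trans (mulVec_zero Q).symm))

theorem gain_add_single (hsym : Q.IsSymm) (c y : n → ℤ) (i : n) (t : ℤ) :
    gain Q c (y + Pi.single i t)
      = gain Q c y + t * (c + (2 • Q) *ᵥ y : n → ℤ) i + t ^ 2 * Q i i := by
  simp only [gain, dotProduct_add, add_dotProduct_mulVec_add hsym, smul_mulVec, Pi.add_apply,
    Pi.smul_apply, mulVec_single, dotProduct_single, single_dotProduct, col_apply, op_smul_eq_mul]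
  ring

-- Completing the square over `ℤ`: `cramer Q c = det Q • Q⁻¹ c`.
theorem cramer_add_smul_dotProduct_mulVec (hsym : Q.IsSymm) (c y : n → ℤ) :
    (cramer Q c + (2 * Q.det) • y) ⬝ᵥ Q *ᵥ (cramer Q c + (2 * Q.det) • y)
      = cramer Q c ⬝ᵥ Q *ᵥ cramer Q c + 4 * Q.det ^ 2 * gain Q c y := by
  simp only [add_dotProduct_mulVec_add hsym, mulVec_cramer, mulVec_smul, smul_dotProduct,
    dotProduct_smul, smul_eq_mul, gain]
  ring

theorem gain_le_of_negDef (hneg : ∀ x : n → ℤ, x ≠ 0 → x ⬝ᵥ Q *ᵥ x < 0) (hsym : Q.IsSymm)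
    (c y : n → ℤ) : gain Q c y ≤ -(cramer Q c ⬝ᵥ Q *ᵥ cramer Q c) := by
  have hdet : 0 < Q.det ^ 2 := sq_pos_of_ne_zero (det_ne_zero_of_negDef hneg)
  have hle := dotProduct_mulVec_nonpos_of_negDef hneg (cramer Q c + (2 * Q.det) • y)
  rw [cramer_add_smul_dotProduct_mulVec hsym] at hle
  nlinarith [dotProduct_mulVec_nonpos_of_negDef hneg (cramer Q c)]

theorem le_and_le_neg_of_isMax_gain (hsym : Q.IsSymm) {c y : n → ℤ}
    (hy : ∀ z, gain Q c z ≤ gain Q c y) (i : n) :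
    Q i i ≤ (c + (2 • Q) *ᵥ y : n → ℤ) i ∧ (c + (2 • Q) *ᵥ y : n → ℤ) i ≤ -Q i i := by
  have hup := hy (y + Pi.single i 1)
  have hdown := hy (y + Pi.single i (-1))
  rw [gain_add_single hsym] at hup hdown
  constructor <;> linarith

theorem finite_setOf_isMax_gain (hneg : ∀ x : n → ℤ, x ≠ 0 → x ⬝ᵥ Q *ᵥ x < 0)
    (hsym : Q.IsSymm) (c : n → ℤ) : {y | ∀ z, gain Q c z ≤ gain Q c y}.Finite := by
  have hinj : Function.Injective fun y => c + (2 • Q) *ᵥ y := fun y y' h => by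
    simp only [add_right_inj, smul_mulVec] at h
    exact mulVec_injective_of_negDef hneg (smul_right_injective _ two_ne_zero h)
  refine ((Set.finite_Icc (fun i => Q i i) fun i => -Q i i).preimage hinj.injOn).subset ?_
  intro y hy
  exact ⟨fun i => (le_and_le_neg_of_isMax_gain hsym hy i).1,
    fun i => (le_and_le_neg_of_isMax_gain hsym hy i).2⟩

theorem exists_isMax_gain (hneg : ∀ x : n → ℤ, x ≠ 0 → x ⬝ᵥ Q *ᵥ x < 0) (hsym : Q.IsSymm)
    (c : n → ℤ) : ∃ y, ∀ z, gain Q c z ≤ gain Q c y := by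
  have hbdd : BddAbove (Set.range (gain Q c)) :=
    ⟨_, Set.forall_mem_range.mpr (gain_le_of_negDef hneg hsym c)⟩
  obtain ⟨y, hy⟩ := Int.csSup_mem (Set.range_nonempty (gain Q c)) hbdd
  exact ⟨y, fun z => hy ▸ le_csSup hbdd (Set.mem_range_self z)⟩

end IntegralForm

theorem covSq_add_two_smul_mulVec {b : ℕ} {Q : Matrix (Fin b) (Fin b) ℤ}
    (hneg : ∀ x : Fin b → ℤ, x ≠ 0 → x ⬝ᵥ Q *ᵥ x < 0) (hsym : Q.IsSymm) (c y : Fin b → ℤ) :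
    covSq Q (c + (2 • Q) *ᵥ y) = covSq Q c + 4 * gain Q c y := by
  set A := Q.map (Int.cast : ℤ → ℚ)
  have hdet : IsUnit A.det := by
    rw [isUnit_iff_ne_zero, ← Int.cast_det]
    exact_mod_cast det_ne_zero_of_negDef hneg
  have hcast : ∀ v : Fin b → ℤ, (fun i => ((Q *ᵥ v) i : ℚ)) = A *ᵥ fun i => (v i : ℚ) :=
    fun v => funext fun i => RingHom.map_mulVec (Int.castRingHom ℚ) Q v i
  have hdot : ∀ u v : Fin b → ℤ,
      (fun i => (u i : ℚ)) ⬝ᵥ (fun i => (v i : ℚ)) = ((u ⬝ᵥ v : ℤ) : ℚ) :=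
    fun u v => (RingHom.map_dotProduct (Int.castRingHom ℚ) u v).symm
  have hsplit : (fun i => ((c + (2 • Q) *ᵥ y : Fin b → ℤ) i : ℚ))
      = (fun i => (c i : ℚ)) + A *ᵥ fun i => ((2 • y : Fin b → ℤ) i : ℚ) := by
    rw [← hcast, smul_mulVec, ← mulVec_smul]
    ext i
    simp
  rw [covSq, hsplit, add_mulVec_dotProduct_inv_mulVec_add (hsym.map _) hdet, ← covSq, ← hcast,
    hdot, hdot, gain, mulVec_smul, dotProduct_smul, smul_dotProduct, dotProduct_smul]
  simp only [nsmul_eq_mul]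
  push_cast
  ring

theorem stmt_5_general (b : ℕ) (Q : Matrix (Fin b) (Fin b) ℤ) (hsym : Q.IsSymm)
    (hneg : ∀ x : Fin b → ℤ, x ≠ 0 → x ⬝ᵥ Q.mulVec x < 0)
    (c : Fin b → ℤ) :
    ∃ c' : Fin b → ℤ,
      (∃ y : Fin b → ℤ, c' - c = (2 • Q).mulVec y) ∧
      (∀ i, Q i i ≤ c' i ∧ c' i < -(Q i i)) ∧
      covSq Q c ≤ covSq Q c' := by
  obtain ⟨y, hy, hsum⟩ := Set.exists_max_image _ (fun y => ∑ i, y i)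
    (finite_setOf_isMax_gain hneg hsym c) (exists_isMax_gain hneg hsym c)
  refine ⟨c + (2 • Q) *ᵥ y, ⟨y, add_sub_cancel_left _ _⟩, fun i => ?_, ?_⟩
  · obtain ⟨hlow, hhigh⟩ := le_and_le_neg_of_isMax_gain hsym hy i
    refine ⟨hlow, hhigh.lt_of_ne fun hface => ?_⟩
    have hstep : y + Pi.single i 1 ∈ {y | ∀ z, gain Q c z ≤ gain Q c y} := fun z => by
      rw [gain_add_single hsym, hface]
      linarith [hy z]
    have := hsum _ hstep
    simp [Finset.sum_add_distrib] at this
  · have hgain_zero : gain Q c 0 = 0 := by simp [gain]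
    have hgain : (0 : ℚ) ≤ gain Q c y := by exact_mod_cast hgain_zero ▸ hy 0
    rw [covSq_add_two_smul_mulVec hneg hsym]
    linarith

/-- Every characteristic covector for a negative definite symmetric
integer matrix `Q` has a representative modulo `2Qℤ^b` lying in the hypercube
`Q i i ≤ c' i < −Q i i`, whose square is at least that of `c`. -/
theorem stmt_5 (b : ℕ) (Q : Matrix (Fin b) (Fin b) ℤ) (hsym : Q.IsSymm)
    (hneg : ∀ x : Fin b → ℤ, x ≠ 0 → x ⬝ᵥ Q.mulVec x < 0)
    (c : Fin b → ℤ) (hchar : ∀ x : Fin b → ℤ, c ⬝ᵥ x ≡ x ⬝ᵥ Q.mulVec x [ZMOD 2]) :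
    ∃ c' : Fin b → ℤ,
      (∃ y : Fin b → ℤ, c' - c = (2 • Q).mulVec y) ∧
      (∀ i, Q i i ≤ c' i ∧ c' i < -(Q i i)) ∧
      covSq Q c ≤ covSq Q c' :=
  stmt_5_general b Q hsym hneg c
end

section
/- For coprime integers α, β with β odd and α > β ≥ 1, there exists a continued fraction expansion α/β = [a₁, a₂, …, a_m] with m odd and a₂, a₄, … all even. -/
/-- Evaluation of the continued fraction `[a₁,…,a_m] = a₁ − 1/(a₂ − 1/(⋯ − 1/a_m))`.
(Note `1/0 = 0` in `ℚ`, so `cfVal [a] = a`.) -/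
def cfVal : List ℤ → ℚ
  | [] => 0
  | a :: l => (a : ℚ) - 1 / cfVal l

/-!
A fraction `α / β` with `β` odd is peeled two entries at a time. Write `α = aβ - r` and
`β = 2qr - s` with nearest-integer quotients, so that `|r| ≤ |β|/2` and `|s| ≤ |r|`; then
`α / β = [a, 2q, …]` continued by an expansion of `r / s`. Since `s ≡ β (mod 2)` the new
denominator is again odd, coprimality passes from `(α, β)` to `(r, s)`, and `|s| < |β|`, so the
descent ends at a denominator `±1`, i.e. at an integer `[α']` of length one.
-/

def HasOddEvenExpansion (x : ℚ) : Prop :=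
  ∃ L : List ℤ, Odd L.length ∧
    (∀ (i : ℕ) (h : i < L.length), i % 2 = 1 → Even (L.get ⟨i, h⟩)) ∧ cfVal L = x

lemma hasOddEvenExpansion_intCast (a : ℤ) : HasOddEvenExpansion a :=
  ⟨[a], by simp, fun i h hi => by simp at h; omega, by simp [cfVal]⟩

lemma HasOddEvenExpansion.cons_cons {x : ℚ} (hx : HasOddEvenExpansion x) (a q : ℤ) :
    HasOddEvenExpansion (a - 1 / (2 * q - 1 / x)) := by
  obtain ⟨L, hlen, heven, rfl⟩ := hx
  refine ⟨a :: 2 * q :: L, by simpa [Nat.odd_add_one, parity_simps] using hlen, ?_,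
    by simp [cfVal]⟩
  rintro (_ | _ | i) h hi
  · simp at hi
  · exact ⟨q, two_mul q⟩
  · exact heven i (by simpa using h) (by omega)

lemma exists_two_mul_natAbs_mul_sub_le (x m : ℤ) (hm : m ≠ 0) :
    ∃ q : ℤ, 2 * (m * q - x).natAbs ≤ m.natAbs := by
  set q := round ((x : ℚ) / m)
  have hle : 2 * |(m : ℚ) * q - x| ≤ |(m : ℚ)| := by
    have hmQ : (m : ℚ) ≠ 0 := by exact_mod_cast hm
    have : (m : ℚ) * q - x = -(m * ((x : ℚ) / m - q)) := by field_simp; ring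
    rw [this, abs_neg, abs_mul]
    nlinarith [abs_sub_round ((x : ℚ) / m), abs_nonneg (m : ℚ)]
  have : 2 * |m * q - x| ≤ |m| := by exact_mod_cast hle
  rw [Int.abs_eq_natAbs, Int.abs_eq_natAbs] at this
  exact ⟨q, by exact_mod_cast this⟩

lemma div_eq_sub_one_div_sub_one_div {K : Type*} [Field K] (a q r s : K) (hr : r ≠ 0)
    (hβ : 2 * q * r - s ≠ 0) :
    (a * (2 * q * r - s) - r) / (2 * q * r - s) = a - 1 / (2 * q - 1 / (r / s)) := by
  rw [one_div_div]
  field_simp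

theorem hasOddEvenExpansion_div (α β : ℤ) (hodd : Odd β) (hcop : IsCoprime α β) :
    HasOddEvenExpansion ((α : ℚ) / β) := by
  induction hn : β.natAbs using Nat.strong_induction_on generalizing α β with
  | _ n ih =>
  have hβ0 : β ≠ 0 := by rintro rfl; exact Int.not_odd_zero hodd
  by_cases hunit : β.natAbs = 1
  · rcases Int.natAbs_eq_iff.mp hunit with rfl | rfl
    · simpa using hasOddEvenExpansion_intCast α
    · simpa [div_neg] using hasOddEvenExpansion_intCast (-α)
  obtain ⟨a, ha⟩ := exists_two_mul_natAbs_mul_sub_le α β hβ0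
  set r := β * a - α with hr
  have hr0 : r ≠ 0 := by
    intro h0
    have hdvd : β ∣ α := ⟨a, by linarith⟩
    exact hunit (Int.isUnit_iff_natAbs_eq.mp (hcop.isUnit_of_dvd' hdvd dvd_rfl))
  obtain ⟨q, hq⟩ := exists_two_mul_natAbs_mul_sub_le β (2 * r) (by omega)
  set s := 2 * r * q - β with hs
  have hcop_rs : IsCoprime r s := by
    have hrβ : IsCoprime r β := by
      rw [show r = β * a + -α by omega]
      exact hcop.neg_left.mul_add_left_left a
    rw [show s = r * (2 * q) + -β by rw [hs]; ring]
    exact (hrβ.symm.neg_left.mul_add_left_left (2 * q)).symm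
  have hs_odd : Odd s := by
    rw [hs, mul_assoc]; exact (even_two_mul _).sub_odd hodd
  have hexp := (ih s.natAbs (by omega) r s hs_odd hcop_rs rfl).cons_cons a q
  have hα : (α : ℚ) = a * (2 * q * r - s) - r := by push_cast [hr, hs]; ring
  have hβ : (β : ℚ) = 2 * q * r - s := by push_cast [hs]; ring
  have hrQ : (r : ℚ) ≠ 0 := by exact_mod_cast hr0
  have hβQ : 2 * (q : ℚ) * r - s ≠ 0 := by rw [← hβ]; exact_mod_cast hβ0
  rwa [hα, hβ, div_eq_sub_one_div_sub_one_div _ _ _ _ hrQ hβQ]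

theorem stmt_7_general (α β : ℤ) (hodd : Odd β)
    (hcop : IsCoprime α β) :
    ∃ L : List ℤ, Odd L.length ∧
      (∀ (i : ℕ) (h : i < L.length), i % 2 = 1 → Even (L.get ⟨i, h⟩)) ∧
      cfVal L = (α : ℚ) / β :=
  hasOddEvenExpansion_div α β hodd hcop

/-- For coprime `α > β ≥ 1` with `β` odd, there is a continued
fraction expansion `α/β = [a₁,…,a_m]` with `m` odd and all even-indexed
entries `a₂, a₄, …` even. -/
theorem stmt_7 (α β : ℤ) (hβ : 1 ≤ β) (hαβ : β < α) (hodd : Odd β)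
    (hcop : IsCoprime α β) :
    ∃ L : List ℤ, Odd L.length ∧
      (∀ (i : ℕ) (h : i < L.length), i % 2 = 1 → Even (L.get ⟨i, h⟩)) ∧
      cfVal L = (α : ℚ) / β :=
  stmt_7_general α β hodd hcop
end

section
/- For coprime integers α, β with α odd and α > β ≥ 1, there exists a continued fraction expansion α/β = [a₁, a₂, …, a_m] with m even and a₁, a₃, … all even. -/
lemma key_aux : ∀ n : ℕ, ∀ α β : ℤ, α.natAbs ≤ n → 1 ≤ β → β < α → Odd α →
    IsCoprime α β →
    ∃ L : List ℤ, Even L.length ∧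
      (∀ (i : ℕ) (h : i < L.length), i % 2 = 0 → Even (L.get ⟨i, h⟩)) ∧
      cfVal L = (α : ℚ) / β := by
  intro n
  induction n with
  | zero => intro α β hn hβ hαβ _ _; omega
  | succ n ih =>
    intro α β hn hβ hαβ hodd hcop
    obtain ⟨k, hk⟩ := hodd
    set q : ℤ := α / (2 * β) with hq
    set a : ℤ := 2 * (q + 1) with ha
    set α₁ : ℤ := a * β - α with hα₁
    have h2β : (0:ℤ) < 2 * β := by omega
    have hdm := Int.mul_ediv_add_emod α (2 * β)
    have hm1 : 0 ≤ α % (2 * β) := Int.emod_nonneg _ (by omega)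
    have hm2 : α % (2 * β) < 2 * β := Int.emod_lt_of_pos _ h2β
    have hα₁eq : α₁ = 2 * β - α % (2 * β) := by
      have h' : α₁ = 2 * β * (α / (2 * β)) + 2 * β - α := by rw [hα₁, ha, hq]; ring
      omega
    have hα₁odd : Odd α₁ := ⟨(q + 1) * β - k - 1, by rw [hα₁, ha, hk]; ring⟩
    have hα₁pos : 1 ≤ α₁ := by
      rcases hα₁odd with ⟨m, hm⟩; omega
    have hα₁lt : α₁ < α := by
      rcases lt_or_ge α (2 * β) with h | h
      · have : α % (2 * β) = α := Int.emod_eq_of_lt (by omega) h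
        omega
      · omega
    have hcop₁ : IsCoprime α₁ β := by
      have h1 := (hcop.neg_left).add_mul_left_left a
      have h2 : -α + β * a = α₁ := by rw [hα₁]; ring
      rwa [h2] at h1
    rcases eq_or_lt_of_le hα₁pos with h1case | hgt1
    · -- α₁ = 1 : take L = [a, β]
      refine ⟨[a, β], by exact ⟨1, rfl⟩, ?_, ?_⟩
      · intro i h hi
        match i, h with
        | 0, h => refine ⟨q + 1, ?_⟩; show a = q + 1 + (q + 1); rw [ha]; ring
        | 1, h => omega
      · have hβQ : (β : ℚ) ≠ 0 := by exact_mod_cast (by omega : β ≠ 0)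
        have heq : (a : ℚ) * β - α = 1 := by
          have : a * β - α = 1 := by omega
          exact_mod_cast this
        simp only [cfVal]
        rw [div_zero, sub_zero]
        field_simp
        linarith [heq]
    · -- α₁ ≥ 3
      set b : ℤ := β / α₁ + 1 with hb
      set β₂ : ℤ := b * α₁ - β with hβ₂
      have hdm2 := Int.mul_ediv_add_emod β α₁
      have hr1 : 0 ≤ β % α₁ := Int.emod_nonneg _ (by omega)
      have hr2 : β % α₁ < α₁ := Int.emod_lt_of_pos _ (by omega)
      have hrne : β % α₁ ≠ 0 := by
        intro h0
        have hdvd : α₁ ∣ β := Int.dvd_of_emod_eq_zero h0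
        have := Int.isUnit_iff.mp (hcop₁.isUnit_of_dvd' dvd_rfl hdvd)
        omega
      have hβ₂eq : β₂ = α₁ - β % α₁ := by
        have h' : β₂ = α₁ * (β / α₁) + α₁ - β := by rw [hβ₂, hb]; ring
        omega
      have hβ₂pos : 1 ≤ β₂ := by omega
      have hβ₂lt : β₂ < α₁ := by omega
      have hcop₂ : IsCoprime α₁ β₂ := by
        have h1 := (hcop₁.neg_right).add_mul_left_right b
        have h2 : -β + α₁ * b = β₂ := by rw [hβ₂]; ring
        rwa [h2] at h1
      obtain ⟨L', hlen, hidx, hval⟩ :=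
        ih α₁ β₂ (by omega) hβ₂pos hβ₂lt hα₁odd hcop₂
      refine ⟨a :: b :: L', ?_, ?_, ?_⟩
      · obtain ⟨m, hm⟩ := hlen
        exact ⟨m + 1, by simp [List.length_cons]; omega⟩
      · intro i h hi
        match i, h with
        | 0, h => refine ⟨q + 1, ?_⟩; show a = q + 1 + (q + 1); rw [ha]; ring
        | 1, h => omega
        | (i + 2), h =>
          exact hidx i (by simpa using h) (by omega)
      · have hβQ : (β : ℚ) ≠ 0 := by exact_mod_cast (by omega : β ≠ 0)
        have hα₁Q : (α₁ : ℚ) ≠ 0 := by exact_mod_cast (by omega : α₁ ≠ 0)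
        have hβ₂Q : (β₂ : ℚ) ≠ 0 := by exact_mod_cast (by omega : β₂ ≠ 0)
        have e1 : (b : ℚ) * α₁ - β = β₂ := by
          have : b * α₁ - β = β₂ := by rw [hβ₂]
          exact_mod_cast this
        have e0 : (a : ℚ) * β - α = α₁ := by
          have : a * β - α = α₁ := by rw [hα₁]
          exact_mod_cast this
        have e2 : (b : ℚ) - 1 / ((α₁ : ℚ) / β₂) = (β : ℚ) / α₁ := by
          rw [one_div_div]
          field_simp
          linarith [e1]
        have e3 : (β : ℚ) / α₁ ≠ 0 := div_ne_zero hβQ hα₁Q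
        simp only [cfVal, hval, e2]
        rw [one_div_div]
        field_simp
        linarith [e0]

/-- For coprime `α > β ≥ 1` with `α` odd, there is a continued
fraction expansion `α/β = [a₁,…,a_m]` with `m` even and all odd-indexed
entries `a₁, a₃, …` even. -/
theorem stmt_8 (α β : ℤ) (hβ : 1 ≤ β) (hαβ : β < α) (hodd : Odd α)
    (hcop : IsCoprime α β) :
    ∃ L : List ℤ, Even L.length ∧
      (∀ (i : ℕ) (h : i < L.length), i % 2 = 0 → Even (L.get ⟨i, h⟩)) ∧
      cfVal L = (α : ℚ) / β := by
  exact key_aux α.natAbs α β le_rfl hβ hαβ hodd hcop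
end

section
/- Let G be a finite abelian group of order h equipped with a nondegenerate symmetric bilinear linking pairing λ : G × G → ℚ/ℤ. If G admits a subgroup M with M = M^⊥ with respect to λ, then h = |M|². -/
open DirectSum

/-- The `n`-torsion of `ℚ/ℤ` matched with homs from `ZMod n`. -/
lemma aux_cyclic (n : ℕ) (hn : 0 < n) :
    Nonempty ((ZMod n →+ AddCircle (1 : ℚ)) ≃ ZMod n) := by
  set B := AddCircle (1 : ℚ)
  set x : B := ((1 / (n : ℚ) : ℚ) : AddCircle (1 : ℚ)) with hxdef
  have hord : addOrderOf x = n := AddCircle.addOrderOf_period_div hn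
  have hnx : (n : ℤ) • x = 0 := by
    rw [natCast_zsmul, ← hord]; exact addOrderOf_nsmul_eq_zero x
  -- the hom `ZMod n →+ B` sending `1` to `x`
  set ψ : ZMod n →+ B := ZMod.lift n ⟨zmultiplesHom B x, hnx⟩ with hψdef
  have hψ : ∀ m : ℤ, ψ (m : ZMod n) = m • x := fun m => ZMod.lift_coe n _ m
  have hψinj : Function.Injective ψ := by
    rw [hψdef, ZMod.lift_injective]
    intro m hm
    have : (addOrderOf x : ℤ) ∣ m := addOrderOf_dvd_iff_zsmul_eq_zero.mpr hm
    rw [hord] at this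
    exact (ZMod.intCast_zmod_eq_zero_iff_dvd m n).mpr this
  -- g : ZMod n → n-torsion of B, bijective
  have htor : ∀ k : ZMod n, n • ψ k = 0 := by
    intro k
    rw [← map_nsmul]
    have : n • k = 0 := by
      rw [nsmul_eq_mul, ZMod.natCast_self, zero_mul]
    rw [this, map_zero]
  let g : ZMod n → {b : B // n • b = 0} := fun k => ⟨ψ k, htor k⟩
  have hginj : Function.Injective g := fun a b hab =>
    hψinj (congrArg Subtype.val hab)
  have hgsurj : Function.Surjective g := by
    rintro ⟨b, hb⟩
    induction b using QuotientAddGroup.induction_on with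
    | H q =>
    have hb' : ((n • q : ℚ) : AddCircle (1 : ℚ)) = 0 := by
      rw [AddCircle.coe_nsmul]; exact hb
    obtain ⟨m, hm⟩ := (AddCircle.coe_eq_zero_iff _).mp hb'
    refine ⟨((m : ℤ) : ZMod n), ?_⟩
    have hq : q = m • (1 / (n : ℚ)) := by
      have hn' : (n : ℚ) ≠ 0 := Nat.cast_ne_zero.mpr hn.ne'
      field_simp
      rw [zsmul_eq_mul, mul_one_div, eq_div_iff hn', mul_comm]
      simpa [zsmul_eq_mul, nsmul_eq_mul, smul_eq_mul] using hm.symm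
    apply Subtype.ext
    show ψ _ = _
    rw [hψ m, hxdef, ← AddCircle.coe_zsmul, ← hq]
  have eh1 : (ZMod n →+ B) ≃ {f : ℤ →+ B // f (n : ℤ) = 0} := (ZMod.lift n).symm
  have eh2 : {f : ℤ →+ B // f (n : ℤ) = 0} ≃ {b : B // n • b = 0} := by
    refine Equiv.subtypeEquiv (zmultiplesHom B).symm fun f => ?_
    rw [zmultiplesHom_symm_apply]
    have : f (n : ℤ) = n • f 1 := by
      rw [show ((n : ℤ)) = (n : ℤ) • (1 : ℤ) by simp, map_zsmul, natCast_zsmul]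
    rw [this]
  exact ⟨eh1.trans (eh2.trans (Equiv.ofBijective g ⟨hginj, hgsurj⟩).symm)⟩

lemma aux_card_hom (A : Type) [AddCommGroup A] [Finite A] :
    Nonempty ((A →+ AddCircle (1 : ℚ)) ≃ A) := by
  obtain ⟨ι, hι, n, hn, ⟨e⟩⟩ := AddCommGroup.equiv_directSum_zmod_of_finite' A
  classical
  set B := AddCircle (1 : ℚ)
  have e1 : (A →+ B) ≃ ((⨁ i, ZMod (n i)) →+ B) :=
    (AddEquiv.addMonoidHomCongrLeft e).toEquiv
  have e2 : ((⨁ i, ZMod (n i)) →+ B) ≃ (∀ i, ZMod (n i) →+ B) :=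
    DFinsupp.liftAddHom.symm.toEquiv
  have e3 : (∀ i, ZMod (n i) →+ B) ≃ (∀ i, ZMod (n i)) :=
    Equiv.piCongrRight fun i => (aux_cyclic (n i) (Nat.lt_of_lt_of_le Nat.zero_lt_one (hn i).le)).some
  have e4 : (∀ i, ZMod (n i)) ≃ (⨁ i, ZMod (n i)) := DFinsupp.equivFunOnFintype.symm
  exact ⟨e1.trans <| e2.trans <| e3.trans <| e4.trans e.symm.toEquiv⟩

/-- algebraic core of the torsion lemma: if a finite abelian
group `G` carries a nondegenerate symmetric bilinear linking pairing
`λ : G × G → ℚ/ℤ` and `M ≤ G` satisfies `M = M^⊥`, then `|G| = |M|²`. -/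
theorem stmt_13 (G : Type) [AddCommGroup G] [Finite G]
    (lk : G → G → AddCircle (1 : ℚ))
    (hsymm : ∀ g h, lk g h = lk h g)
    (hadd : ∀ g g' h, lk (g + g') h = lk g h + lk g' h)
    (hnd : ∀ g : G, (∀ h : G, lk g h = 0) → g = 0)
    (M : AddSubgroup G)
    (hM : {g : G | ∀ m ∈ M, lk g m = 0} = (M : Set G)) :
    Nat.card G = Nat.card M ^ 2 := by
  have lk0 : ∀ g : G, lk 0 g = 0 := by
    intro g
    have h := hadd 0 0 g
    rw [add_zero] at h
    exact (left_eq_add.mp h)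
  have lk0' : ∀ g : G, lk g 0 = 0 := fun g => by rw [hsymm]; exact lk0 g
  have hadd' : ∀ g h h' : G, lk g (h + h') = lk g h + lk g h' := fun g h h' => by
    rw [hsymm, hadd, hsymm h g, hsymm h' g]
  have hneg : ∀ g h : G, lk g (-h) = - lk g h := by
    intro g h
    have h0 := hadd' g h (-h)
    rw [add_neg_cancel, lk0'] at h0
    exact (eq_neg_of_add_eq_zero_right h0.symm)
  have hMiso : ∀ g ∈ M, ∀ m ∈ M, lk g m = 0 := by
    intro g hg
    have : g ∈ {g : G | ∀ m ∈ M, lk g m = 0} := hM ▸ hg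
    exact this
  -- the homomorphism G →+ (M →+ ℚ/ℤ) with kernel M
  let φ : G →+ (M →+ AddCircle (1 : ℚ)) :=
    { toFun := fun g =>
        { toFun := fun m => lk g m
          map_zero' := lk0' g
          map_add' := fun m m' => hadd' g m m' }
      map_zero' := AddMonoidHom.ext fun m => lk0 m
      map_add' := fun g g' => by ext m; exact hadd g g' m }
  have hker : φ.ker = M := by
    ext g
    constructor
    · intro hg
      have hz : ∀ m ∈ M, lk g m = 0 := fun m hm =>
        congrArg (fun f : M →+ AddCircle (1 : ℚ) => f ⟨m, hm⟩) (AddMonoidHom.mem_ker.mp hg)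
      have : g ∈ {g : G | ∀ m ∈ M, lk g m = 0} := hz
      rw [hM] at this
      exact this
    · intro hg
      refine AddMonoidHom.mem_ker.mpr (AddMonoidHom.ext fun m => ?_)
      exact hMiso g hg m m.2
  have hfinM : Finite ((M : Type) →+ AddCircle (1 : ℚ)) :=
    Finite.of_equiv _ (aux_card_hom M).some.symm
  have hfinQ : Finite ((G ⧸ M) →+ AddCircle (1 : ℚ)) :=
    Finite.of_equiv _ (aux_card_hom (G ⧸ M)).some.symm
  -- first inequality: |G/M| ≤ |M|
  have h1 : Nat.card (G ⧸ M) ≤ Nat.card M := by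
    have e := (QuotientAddGroup.quotientKerEquivRange φ).toEquiv
    rw [hker] at e
    calc Nat.card (G ⧸ M) = Nat.card φ.range := Nat.card_congr e
      _ ≤ Nat.card ((M : Type) →+ AddCircle (1 : ℚ)) :=
        Nat.card_le_card_of_injective _ Subtype.val_injective
      _ = Nat.card M := Nat.card_congr (aux_card_hom M).some
  -- second inequality: |M| ≤ |G/M|
  have h2 : Nat.card M ≤ Nat.card (G ⧸ M) := by
    let χ : M → (G ⧸ M) →+ AddCircle (1 : ℚ) := fun m =>
      QuotientAddGroup.lift M
        { toFun := fun g => lk g m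
          map_zero' := lk0 m
          map_add' := fun g g' => hadd g g' m }
        (fun g hg => hMiso g hg m m.2)
    have hχinj : Function.Injective χ := by
      intro m m' hmm
      have hval : ∀ g : G, lk g (m : G) = lk g (m' : G) := fun g =>
        congrArg (fun f : (G ⧸ M) →+ AddCircle (1 : ℚ) => f (QuotientAddGroup.mk g)) hmm
      have hz : ∀ g : G, lk ((m : G) - (m' : G)) g = 0 := by
        intro g
        rw [sub_eq_add_neg, hadd, hsymm (-(m' : G)) g, hneg, hsymm (m : G) g, hval g,
          hsymm g (m' : G), add_neg_cancel]
      have : (m : G) - (m' : G) = 0 := hnd _ hz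
      exact Subtype.ext (sub_eq_zero.mp this)
    calc Nat.card M ≤ Nat.card ((G ⧸ M) →+ AddCircle (1 : ℚ)) :=
        Nat.card_le_card_of_injective χ hχinj
      _ = Nat.card (G ⧸ M) := Nat.card_congr (aux_card_hom (G ⧸ M)).some
  have heq : Nat.card (G ⧸ M) = Nat.card M := le_antisymm h1 h2
  rw [AddSubgroup.card_eq_card_quotient_mul_card_addSubgroup M, heq, sq]
end

section
/- For the rank-2 reduced negative definite form Q = [[a,b],[b,c]] (0 ≥ 2b ≥ a ≥ c), two characteristic points (x,y), (x',y') ∈ ℤ² correspond to the same class in ℤ²/2Qℤ² + (translation structure) if and only if (x'−x, y'−y) = 2m(a,b) + 2n(b,c) for some integers m, n; and the parallelogram with vertices ±(a+b, b+c), ±(a−b, b−c) contains exactly one representative of each class among its interior characteristic points together with those in one boundary component minus ±(a−b,b−c). -/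
open Matrix

/-! Characteristic points are exactly `w + 2ℤ²` with `w = (a, c)`, so the characteristic classes
modulo `2Qℤ²` form a translate of the image of `x ↦ 2x` in `ℤ² ⧸ 2Qℤ²`. Since `ℤ²` is torsion-free,
`2x ∈ 2Qℤ²` iff `x ∈ Qℤ²`, so this image is `ℤ² ⧸ Qℤ²`, whose order is `|det Q|` by the Smith
normal form; negative definiteness makes `Q` injective and `det Q = ac − b²` positive. -/

theorem Matrix.index_range_mulVecLin {n : Type*} [Fintype n] [DecidableEq n] (M : Matrix n n ℤ)
    (hM : Function.Injective M.mulVecLin) :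
    (LinearMap.range M.mulVecLin).toAddSubgroup.index = M.det.natAbs := by
  let e := LinearEquiv.ofInjective M.mulVecLin hM
  have hcomp : (LinearMap.range M.mulVecLin).subtype ∘ₗ AddMonoidHom.toIntLinearMap
      (e : (n → ℤ) →+ _) = M.mulVecLin := rfl
  have h := Submodule.natAbs_det_equiv (LinearMap.range M.mulVecLin) e
  rw [hcomp, ← Matrix.toLin'_apply', LinearMap.det_toLin'] at h
  exact h.symm

theorem Matrix.smul_mem_range_smul_mulVecLin_iff {n : Type*} [Fintype n] {k : ℤ} (hk : k ≠ 0)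
    (M : Matrix n n ℤ) (x : n → ℤ) :
    k • x ∈ LinearMap.range (k • M).mulVecLin ↔ x ∈ LinearMap.range M.mulVecLin := by
  simp only [LinearMap.mem_range, Matrix.mulVecLin_apply, Matrix.smul_mulVec,
    smul_right_injective (n → ℤ) hk |>.eq_iff]

theorem Matrix.ncard_image_mk_range_add_smul {n : Type*} [Fintype n] [DecidableEq n] {k : ℤ}
    (hk : k ≠ 0) (M : Matrix n n ℤ) (hM : Function.Injective M.mulVecLin) (w : n → ℤ) :
    ((QuotientAddGroup.mk (s := (LinearMap.range (k • M).mulVecLin).toAddSubgroup)) ''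
      Set.range (fun x => w + k • x)).ncard = M.det.natAbs := by
  set H := (LinearMap.range (k • M).mulVecLin).toAddSubgroup
  let ψ : (n → ℤ) →+ (n → ℤ) ⧸ H := (QuotientAddGroup.mk' H).comp (zsmulAddGroupHom k)
  have hker : ψ.ker = (LinearMap.range M.mulVecLin).toAddSubgroup := by
    ext x
    rw [AddMonoidHom.mem_ker, AddMonoidHom.comp_apply, QuotientAddGroup.mk'_apply,
      QuotientAddGroup.eq_zero_iff]
    exact M.smul_mem_range_smul_mulVecLin_iff hk x
  have himage : QuotientAddGroup.mk '' Set.range (fun x => w + k • x) =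
      (fun q => (w : (n → ℤ) ⧸ H) + q) '' Set.range ψ := by
    rw [← Set.range_comp, ← Set.range_comp]
    rfl
  rw [himage, Set.ncard_image_of_injective _ (add_right_injective _), ← AddMonoidHom.coe_range,
    ← Nat.card_coe_set_eq, SetLike.coe_sort_coe,
    ← Nat.card_congr (QuotientAddGroup.quotientKerEquivRange ψ).toEquiv, hker,
    ← AddSubgroup.index_eq_card, M.index_range_mulVecLin hM]

theorem Matrix.mulVecLin_injective_of_dotProduct_mulVec_ne_zero {n R : Type*} [Fintype n]
    [CommRing R] (M : Matrix n n R) (hM : ∀ x : n → R, x ≠ 0 → x ⬝ᵥ M *ᵥ x ≠ 0) :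
    Function.Injective M.mulVecLin := by
  rw [← LinearMap.ker_eq_bot, LinearMap.ker_eq_bot']
  intro x hx
  by_contra hx0
  exact hM x hx0 (by rw [← Matrix.mulVecLin_apply, hx, dotProduct_zero])

theorem Int.setOf_forall_modEq_eq_range {n : Type*} (k : ℤ) (w : n → ℤ) :
    {v : n → ℤ | ∀ i, v i ≡ w i [ZMOD k]} = Set.range (fun x => w + k • x) := by
  ext v
  simp only [Set.mem_ofPred_eq, Set.mem_range, Int.modEq_iff_dvd]
  constructor
  · intro h
    choose x hx using h
    exact ⟨fun i => -x i, funext fun i => by simp; linarith [hx i]⟩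
  · rintro ⟨x, rfl⟩ i
    exact ⟨-x i, by simp⟩

theorem det_pos_of_forall_dotProduct_mulVec_neg (a b c : ℤ)
    (hneg : ∀ x : Fin 2 → ℤ, x ≠ 0 → x ⬝ᵥ (!![a, b; b, c]).mulVec x < 0) :
    0 < a * c - b ^ 2 := by
  have hc : c < 0 := by
    simpa [mulVec, dotProduct, Fin.sum_univ_two] using hneg ![0, 1] (by simp)
  -- the form takes the value `c (ac - b²)` at `(c, -b)`
  have h := hneg ![c, -b] (by simp [hc.ne])
  simp [mulVec, dotProduct, Fin.sum_univ_two] at h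
  nlinarith

theorem mem_range_two_smul_mulVecLin_iff (a b c : ℤ) (z : Fin 2 → ℤ) :
    z ∈ LinearMap.range ((2 • (!![a, b; b, c] : Matrix (Fin 2) (Fin 2) ℤ)).mulVecLin) ↔
      ∃ m n : ℤ, z 0 = 2 * (m * a + n * b) ∧ z 1 = 2 * (m * b + n * c) := by
  have hmulVec (y : Fin 2 → ℤ) : (2 • !![a, b; b, c]) *ᵥ y =
      ![2 * (y 0 * a + y 1 * b), 2 * (y 0 * b + y 1 * c)] := by
    ext i; fin_cases i <;> simp [mulVec, dotProduct, Fin.sum_univ_two] <;> ring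
  simp only [LinearMap.mem_range, mulVecLin_apply, hmulVec, funext_iff, Fin.forall_fin_two,
    cons_val_zero, cons_val_one]
  constructor
  · rintro ⟨y, h0, h1⟩
    exact ⟨y 0, y 1, h0.symm, h1.symm⟩
  · rintro ⟨m, n, h0, h1⟩
    exact ⟨![m, n], by simp [h0], by simp [h1]⟩

theorem stmt_14_general (a b c : ℤ)
    (hneg : ∀ x : Fin 2 → ℤ, x ≠ 0 → x ⬝ᵥ (!![a, b; b, c]).mulVec x < 0) :
    (∀ v w : Fin 2 → ℤ,
      (v 0 ≡ a [ZMOD 2] ∧ v 1 ≡ c [ZMOD 2]) →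
      (w 0 ≡ a [ZMOD 2] ∧ w 1 ≡ c [ZMOD 2]) →
      ((QuotientAddGroup.mk
          (s := (LinearMap.range
            ((2 • (!![a, b; b, c] : Matrix (Fin 2) (Fin 2) ℤ)).mulVecLin)).toAddSubgroup) v
        = QuotientAddGroup.mk w) ↔
        ∃ m n : ℤ, w 0 - v 0 = 2 * (m * a + n * b) ∧
          w 1 - v 1 = 2 * (m * b + n * c))) ∧
    Set.ncard ((QuotientAddGroup.mk
        (s := (LinearMap.range
          ((2 • (!![a, b; b, c] : Matrix (Fin 2) (Fin 2) ℤ)).mulVecLin)).toAddSubgroup))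
        '' {v : Fin 2 → ℤ | v 0 ≡ a [ZMOD 2] ∧ v 1 ≡ c [ZMOD 2]})
      = (a * c - b ^ 2).toNat := by
  refine ⟨fun v w _ _ => ?_, ?_⟩
  · rw [QuotientAddGroup.eq, Submodule.mem_toAddSubgroup, mem_range_two_smul_mulVecLin_iff]
    simp only [Pi.add_apply, Pi.neg_apply, neg_add_eq_sub]
  · have hchar : {v : Fin 2 → ℤ | v 0 ≡ a [ZMOD 2] ∧ v 1 ≡ c [ZMOD 2]} =
        Set.range (fun x => ![a, c] + (2 : ℤ) • x) := by
      rw [← Int.setOf_forall_modEq_eq_range]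
      simp [Fin.forall_fin_two]
    have hinj := (!![a, b; b, c]).mulVecLin_injective_of_dotProduct_mulVec_ne_zero
      fun x hx => (hneg x hx).ne
    rw [hchar, ← ofNat_zsmul, ncard_image_mk_range_add_smul two_ne_zero _ hinj, det_fin_two_of, ← sq]
    have hdet := det_pos_of_forall_dotProduct_mulVec_neg a b c hneg
    omega

/-- For the reduced negative definite form `Q = [[a,b],[b,c]]`,
two characteristic points are in the same class modulo `2Qℤ²` iff they differ
by `2m(a,b) + 2n(b,c)`, and the number of characteristic classes modulo
`2Qℤ²` equals `det Q = ac − b²`. -/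
theorem stmt_14 (a b c : ℤ) (h1 : 0 ≥ 2 * b) (h2 : 2 * b ≥ a) (h3 : a ≥ c)
    (hneg : ∀ x : Fin 2 → ℤ, x ≠ 0 → x ⬝ᵥ (!![a, b; b, c]).mulVec x < 0) :
    (∀ v w : Fin 2 → ℤ,
      (v 0 ≡ a [ZMOD 2] ∧ v 1 ≡ c [ZMOD 2]) →
      (w 0 ≡ a [ZMOD 2] ∧ w 1 ≡ c [ZMOD 2]) →
      ((QuotientAddGroup.mk
          (s := (LinearMap.range
            ((2 • (!![a, b; b, c] : Matrix (Fin 2) (Fin 2) ℤ)).mulVecLin)).toAddSubgroup) v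
        = QuotientAddGroup.mk w) ↔
        ∃ m n : ℤ, w 0 - v 0 = 2 * (m * a + n * b) ∧
          w 1 - v 1 = 2 * (m * b + n * c))) ∧
    Set.ncard ((QuotientAddGroup.mk
        (s := (LinearMap.range
          ((2 • (!![a, b; b, c] : Matrix (Fin 2) (Fin 2) ℤ)).mulVecLin)).toAddSubgroup))
        '' {v : Fin 2 → ℤ | v 0 ≡ a [ZMOD 2] ∧ v 1 ≡ c [ZMOD 2]})
      = (a * c - b ^ 2).toNat :=
  stmt_14_general a b c hneg
end

section
/- The Seifert matrix M = [[1,−1,−1,0],[0,1,−1,0],[0,0,1,−1],[0,0,0,1]] satisfies x M xᵀ = 0 for x = (1,1,1,0), and the maximal rank of a sublattice N ⊆ ℤ⁴ with y M zᵀ = 0 for all y, z ∈ N is exactly 1; hence the Taylor invariant m = 4/2 − 1 = 1. -/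
/-!
The quadratic form `q(w) = w M wᵀ` vanishes at `(1,1,1,0)`, but on the
hyperplane `w₂ = 0` it is `w₀² - w₀w₁ + w₁² + w₃²`, which is positive definite. A totally isotropic
sublattice `N` has `q = 0` on all of `N`, so the coordinate `w ↦ w₂` is injective on `N`;
hence `N` embeds in `ℤ` and has rank at most `1`.
-/

open Matrix Module

theorem Submodule.finrank_span_singleton_of_ne_zero {R M : Type*} [CommRing R] [IsDomain R]
    [AddCommGroup M] [Module R M] [IsTorsionFree R M] {x : M} (hx : x ≠ 0) :
    finrank R (R ∙ x) = 1 := by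
  have hrange : Set.range ![x] = {x} := Set.range_unique
  rw [← hrange, finrank_span_eq_card (.of_subsingleton 0 hx), Fintype.card_fin]

theorem Submodule.finrank_le_one_of_disjoint_ker {R M : Type*} [CommRing R]
    [StrongRankCondition R] [AddCommGroup M] [Module R M] {N : Submodule R M} {f : M →ₗ[R] R}
    (hf : Disjoint N (LinearMap.ker f)) : finrank R N ≤ 1 := by
  have hinj : Function.Injective (f ∘ₗ N.subtype) := by
    rw [← LinearMap.ker_eq_bot, LinearMap.ker_eq_bot']
    exact fun w hw => Subtype.ext (Submodule.disjoint_def.mp hf w w.2 hw)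
  simpa using LinearMap.finrank_le_finrank_of_injective hinj

namespace Seifert10145

abbrev seifertMatrix : Matrix (Fin 4) (Fin 4) ℤ :=
  !![1, -1, -1, 0; 0, 1, -1, 0; 0, 0, 1, -1; 0, 0, 0, 1]

theorem dotProduct_seifertMatrix_mulVec (y z : Fin 4 → ℤ) :
    y ⬝ᵥ seifertMatrix *ᵥ z =
      y 0 * (z 0 - z 1 - z 2) + y 1 * (z 1 - z 2) + y 2 * (z 2 - z 3) + y 3 * z 3 := by
  simp only [dotProduct, mulVec, Fin.sum_univ_four, of_apply, cons_val', cons_val_fin_one,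
    cons_val_zero, cons_val_one, cons_val]
  ring

theorem eq_zero_of_seifert_isotropic {w : Fin 4 → ℤ} (hw : w ⬝ᵥ seifertMatrix *ᵥ w = 0)
    (h₂ : w 2 = 0) : w = 0 := by
  rw [dotProduct_seifertMatrix_mulVec, h₂] at hw
  have hsq : (2 * w 0 - w 1) ^ 2 + 3 * w 1 ^ 2 + 4 * w 3 ^ 2 = 0 := by linear_combination 4 * hw
  have h₁ : w 1 = 0 := by nlinarith [sq_nonneg (2 * w 0 - w 1), sq_nonneg (w 3)]
  have h₃ : w 3 = 0 := by nlinarith [sq_nonneg (2 * w 0 - w 1), sq_nonneg (w 1)]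
  have h₀ : w 0 = 0 := by nlinarith [sq_nonneg (w 1), sq_nonneg (w 3)]
  ext i
  fin_cases i <;> assumption

end Seifert10145

/-- For the Seifert matrix
`M = [[1,−1,−1,0],[0,1,−1,0],[0,0,1,−1],[0,0,0,1]]` of `10₁₄₅`:
`x M xᵀ = 0` for `x = (1,1,1,0)`, and the maximal rank of a totally isotropic
sublattice of `ℤ⁴` is exactly `1` (so the Taylor invariant is `4/2 − 1 = 1`). -/
theorem stmt_18 :
    (![1, 1, 1, 0] ⬝ᵥ
        (!![1, -1, -1, 0; 0, 1, -1, 0; 0, 0, 1, -1; 0, 0, 0, 1] :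
          Matrix (Fin 4) (Fin 4) ℤ).mulVec ![1, 1, 1, 0] = 0) ∧
    (∃ N : Submodule ℤ (Fin 4 → ℤ),
      (∀ y ∈ N, ∀ z ∈ N, y ⬝ᵥ
        (!![1, -1, -1, 0; 0, 1, -1, 0; 0, 0, 1, -1; 0, 0, 0, 1] :
          Matrix (Fin 4) (Fin 4) ℤ).mulVec z = 0) ∧
      Module.finrank ℤ N = 1) ∧
    (∀ N : Submodule ℤ (Fin 4 → ℤ),
      (∀ y ∈ N, ∀ z ∈ N, y ⬝ᵥ
        (!![1, -1, -1, 0; 0, 1, -1, 0; 0, 0, 1, -1; 0, 0, 0, 1] :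
          Matrix (Fin 4) (Fin 4) ℤ).mulVec z = 0) →
      Module.finrank ℤ N ≤ 1) := by
  have hx : ![1, 1, 1, 0] ⬝ᵥ Seifert10145.seifertMatrix *ᵥ ![1, 1, 1, 0] = 0 := by decide
  refine ⟨hx, ⟨ℤ ∙ ![1, 1, 1, 0], ?_, ?_⟩, fun N hN => ?_⟩
  · intro y hy z hz
    obtain ⟨s, rfl⟩ := Submodule.mem_span_singleton.mp hy
    obtain ⟨t, rfl⟩ := Submodule.mem_span_singleton.mp hz
    rw [mulVec_smul, dotProduct_smul, smul_dotProduct, hx, smul_zero, smul_zero]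
  · exact Submodule.finrank_span_singleton_of_ne_zero (by decide)
  · refine Submodule.finrank_le_one_of_disjoint_ker (f := LinearMap.proj 2) ?_
    exact Submodule.disjoint_def.mpr fun w hw h₂ =>
      Seifert10145.eq_zero_of_seifert_isotropic (hN w hw w hw) h₂
end
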